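/- With the setup of the previous derivative identity, the derivative with respect to μ of the cumulative probability P(W₁ ≤ k) equals −P(W₂ = k) = −((ℓ+1)(ℓ+2)⋯(ℓ+k)/k!)·p^(ℓ+1)·(1−p)^k. -/

import Mathlib

/-!
Differentiating the point probabilities of `nb(p, ℓ)` in `p` gives the telescoping identity
`∂ₚ P(W₁ = j) = (ℓ / p²) (P(W₂ = j) - P(W₂ = j - 1))`, so `∂ₚ P(W₁ ≤ k) = (ℓ / p²) P(W₂ = k)`.
Since `p = ℓ / (μ + ℓ)` has `dp/dμ = -p² / ℓ`, the chain rule turns this into `-P(W₂ = k)`.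
-/

open Finset

/-- Point probability of the negative binomial distribution `nb(ℓ, p)`. -/
noncomputable def nbPt (l p : ℝ) (k : ℕ) : ℝ :=
  (∏ i ∈ range k, (l + i)) / (k.factorial : ℝ) * p ^ l * (1 - p) ^ k

theorem hasDerivAt_nbPt (l : ℝ) {p : ℝ} (hp : p ≠ 0) (j : ℕ) :
    HasDerivAt (fun p => nbPt l p j)
      ((∏ i ∈ range j, (l + i)) / (j.factorial : ℝ) *
        (l * p ^ (l - 1) * (1 - p) ^ j - p ^ l * (j * (1 - p) ^ (j - 1)))) p := by
  have hq := ((hasDerivAt_id' p).const_sub 1).fun_pow j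
  have hr := (Real.hasDerivAt_rpow_const (p := l) (Or.inl hp)).const_mul
    ((∏ i ∈ range j, (l + i)) / (j.factorial : ℝ))
  exact (hr.mul hq).congr_deriv (by ring)

theorem rpow_add_one_eq_rpow_sub_one_mul (l : ℝ) {p : ℝ} (hp : p ≠ 0) :
    p ^ (l + 1) = p ^ (l - 1) * p * p := by
  rw [Real.rpow_add_one hp, ← Real.rpow_add_one hp (l - 1), sub_add_cancel]

theorem prod_range_succ_add_cast (l : ℝ) (j : ℕ) :
    ∏ i ∈ range (j + 1), (l + i) = l * ∏ i ∈ range j, (l + 1 + i) := by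
  rw [prod_range_succ', mul_comm]
  push_cast
  simp only [add_zero, add_assoc, add_comm (1 : ℝ)]

theorem hasDerivAt_nbPt_zero (l : ℝ) {p : ℝ} (hp : p ≠ 0) :
    HasDerivAt (fun p => nbPt l p 0) (l / p ^ 2 * nbPt (l + 1) p 0) p := by
  refine (hasDerivAt_nbPt l hp 0).congr_deriv ?_
  simp only [nbPt, rpow_add_one_eq_rpow_sub_one_mul l hp]
  field_simp
  simp

theorem hasDerivAt_nbPt_succ (l : ℝ) {p : ℝ} (hp : p ≠ 0) (j : ℕ) :
    HasDerivAt (fun p => nbPt l p (j + 1))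
      (l / p ^ 2 * (nbPt (l + 1) p (j + 1) - nbPt (l + 1) p j)) p := by
  refine (hasDerivAt_nbPt l hp (j + 1)).congr_deriv ?_
  have hpl : p ^ l = p ^ (l - 1) * p := by rw [← Real.rpow_add_one hp, sub_add_cancel]
  simp only [nbPt, prod_range_succ_add_cast, prod_range_succ (fun i : ℕ => l + 1 + i),
    Nat.factorial_succ, Nat.add_sub_cancel, rpow_add_one_eq_rpow_sub_one_mul l hp, hpl]
  push_cast
  field_simp
  ring

theorem hasDerivAt_sum_nbPt (l : ℝ) {p : ℝ} (hp : p ≠ 0) (k : ℕ) :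
    HasDerivAt (fun p => ∑ j ∈ range (k + 1), nbPt l p j) (l / p ^ 2 * nbPt (l + 1) p k) p := by
  induction k with
  | zero => simpa using hasDerivAt_nbPt_zero l hp
  | succ k ih =>
    simp_rw [sum_range_succ _ (k + 1)]
    exact (ih.add (hasDerivAt_nbPt_succ l hp k)).congr_deriv (by ring)

theorem hasDerivAt_div_add_self {l : ℝ} (hl : l ≠ 0) {μ : ℝ} (hμl : μ + l ≠ 0) :
    HasDerivAt (fun m => l / (m + l)) (-((l / (μ + l)) ^ 2 / l)) μ := by
  have := ((hasDerivAt_id' μ).add_const l).inv hμl |>.const_mul l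
  simp only [div_eq_mul_inv]
  exact this.congr_deriv (by field_simp)

/-- The derivative in `μ` of `P(W₁ ≤ k)` for `W₁ ~ nb(p, ℓ)` with mean `μ = ℓ(1−p)/p`
(so `p = ℓ/(μ+ℓ)`) equals `−P(W₂ = k) = −((ℓ+1)⋯(ℓ+k)/k!)·p^(ℓ+1)·(1−p)^k`
where `W₂ ~ nb(p, ℓ+1)`. -/
theorem stmt_8 (l : ℝ) (hl : 0 < l) (μ : ℝ) (hμ : 0 < μ) (k : ℕ) :
    HasDerivAt (fun m : ℝ => ∑ j ∈ range (k + 1), nbPt l (l / (m + l)) j)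
      (-(nbPt (l + 1) (l / (μ + l)) k)) μ ∧
    -(nbPt (l + 1) (l / (μ + l)) k)
      = -((∏ i ∈ range k, (l + 1 + i)) / (k.factorial : ℝ) *
          (l / (μ + l)) ^ (l + 1) * (1 - l / (μ + l)) ^ k) := by
  have hμl : μ + l ≠ 0 := by positivity
  have hp : l / (μ + l) ≠ 0 := div_ne_zero hl.ne' hμl
  refine ⟨?_, rfl⟩
  refine ((hasDerivAt_sum_nbPt l hp k).comp μ (hasDerivAt_div_add_self hl.ne' hμl)).congr_deriv ?_
  field_simp
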